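/- arXiv:1812.10520 — 7 statements merged into one kernel-verified Lean document; each statement's English description precedes it below -/
import Mathlib

section
/- Let K ≥ 2 and let k, l be integers with 1 ≤ k ≤ l ≤ K−1. Let a, b : {k,…,K} → ℝ satisfy 0 ≤ b(c) for every c and b(c) ≤ b(c′) whenever k ≤ c ≤ c′ ≤ K. Then for all real numbers R0, R1 and all real numbers R_{1,l+1},…,R_{1,K}, the following are equivalent: (I) there exist real numbers R_{1,k},…,R_{1,l} such that for every c ∈ {k,…,K} one has R0 + Σ_{j=c}^{K} R_{1,j} ≤ a(c), R1 − Σ_{j=c}^{K} R_{1,j} ≤ b(c), and R_{1,c} ≥ 0, and moreover Σ_{j=k}^{K} R_{1,j} ≤ R1; (II) for every c ∈ {k,…,l}: R0 + R1 ≤ b(c) + a(c) and R0 + Σ_{j=l+1}^{K} R_{1,j} ≤ a(c); for every c ∈ {l+1,…,K}: R0 + Σ_{j=c}^{K} R_{1,j} ≤ a(c) and R1 − Σ_{j=c}^{K} R_{1,j} ≤ b(c); Σ_{j=l+1}^{K} R_{1,j} ≤ R1; and R_{1,c} ≥ 0 for every c ∈ {l+1,…,K}. -/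
open Finset

lemma split_sum_aux (f : ℕ → ℝ) (c l K : ℕ) (hc : 1 ≤ c) (hcl : c ≤ l) (hlK : l ≤ K) :
    ∑ j ∈ Icc c K, f j = ∑ j ∈ Icc c l, f j + ∑ j ∈ Icc (l+1) K, f j := by
  have h1 : Icc c K = Ioc (c-1) K := by rw [← Finset.Icc_add_one_left_eq_Ioc]; congr 1; omega
  have h2 : Icc c l = Ioc (c-1) l := by rw [← Finset.Icc_add_one_left_eq_Ioc]; congr 1; omega
  rw [h1, h2, Finset.Icc_add_one_left_eq_Ioc, Finset.sum_Ioc_consecutive f (by omega) hlK]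

lemma tele_aux (f : ℕ → ℝ) (c m : ℕ) (h : c ≤ m + 1) :
    ∑ j ∈ Icc c m, (f j - f (j+1)) = f c - f (m+1) := by
  induction m with
  | zero => interval_cases c <;> simp
  | succ n ih =>
    rcases Nat.lt_or_ge c (n+2) with h1 | h1
    · rw [Finset.sum_Icc_succ_top (by omega : c ≤ n+1), ih (by omega)]; ring
    · have : c = n + 2 := by omega
      subst this; simp

/-- Lemma 2 of the paper: Fourier–Motzkin elimination of the split rates
`R_{1,k}, …, R_{1,l}` from the split-rate polytope. -/
theorem lemma2_FME_split_rates
    (K k l : ℕ) (hK : 2 ≤ K) (hk : 1 ≤ k) (hkl : k ≤ l) (hlK : l ≤ K - 1)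
    (a b : ℕ → ℝ)
    (hb0 : ∀ c, k ≤ c → c ≤ K → 0 ≤ b c)
    (hbmono : ∀ c c', k ≤ c → c ≤ c' → c' ≤ K → b c ≤ b c')
    (R0 R1 : ℝ) (Rhi : ℕ → ℝ) :
    (∃ R : ℕ → ℝ,
        (∀ j, l + 1 ≤ j → j ≤ K → R j = Rhi j) ∧
        (∀ c ∈ Icc k K,
          R0 + ∑ j ∈ Icc c K, R j ≤ a c ∧
          R1 - ∑ j ∈ Icc c K, R j ≤ b c ∧
          0 ≤ R c) ∧
        ∑ j ∈ Icc k K, R j ≤ R1)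
    ↔
    ((∀ c ∈ Icc k l,
        R0 + R1 ≤ b c + a c ∧
        R0 + ∑ j ∈ Icc (l + 1) K, Rhi j ≤ a c) ∧
     (∀ c ∈ Icc (l + 1) K,
        R0 + ∑ j ∈ Icc c K, Rhi j ≤ a c ∧
        R1 - ∑ j ∈ Icc c K, Rhi j ≤ b c) ∧
     ∑ j ∈ Icc (l + 1) K, Rhi j ≤ R1 ∧
     (∀ c ∈ Icc (l + 1) K, 0 ≤ Rhi c)) := by
  have hlK' : l + 1 ≤ K := by omega
  constructor
  · rintro ⟨R, hReq, hRc, hRsum⟩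
    have hsum_eq : ∀ c, l + 1 ≤ c → ∑ j ∈ Icc c K, R j = ∑ j ∈ Icc c K, Rhi j := by
      intro c hc
      refine Finset.sum_congr rfl fun j hj => ?_
      rw [Finset.mem_Icc] at hj
      exact hReq j (by omega) hj.2
    have hnn : ∀ j ∈ Icc k K, 0 ≤ R j := fun j hj => (hRc j hj).2.2
    refine ⟨?_, ?_, ?_, ?_⟩
    · intro c hc
      rw [Finset.mem_Icc] at hc
      have hcK : c ∈ Icc k K := Finset.mem_Icc.mpr ⟨hc.1, by omega⟩
      obtain ⟨h1, h2, _⟩ := hRc c hcK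
      constructor
      · linarith
      · have hsplit := split_sum_aux R c l K (by omega) hc.2 (by omega)
        have hmid : 0 ≤ ∑ j ∈ Icc c l, R j := by
          refine Finset.sum_nonneg fun j hj => ?_
          rw [Finset.mem_Icc] at hj
          exact hnn j (Finset.mem_Icc.mpr ⟨by omega, by omega⟩)
        rw [← hsum_eq (l+1) le_rfl]
        linarith
    · intro c hc
      rw [Finset.mem_Icc] at hc
      have hcK : c ∈ Icc k K := Finset.mem_Icc.mpr ⟨by omega, hc.2⟩
      obtain ⟨h1, h2, _⟩ := hRc c hcK
      rw [← hsum_eq c hc.1]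
      exact ⟨h1, h2⟩
    · have hsplit := split_sum_aux R k l K hk hkl (by omega)
      have hmid : 0 ≤ ∑ j ∈ Icc k l, R j := by
        refine Finset.sum_nonneg fun j hj => ?_
        rw [Finset.mem_Icc] at hj
        exact hnn j (Finset.mem_Icc.mpr ⟨hj.1, by omega⟩)
      calc ∑ j ∈ Icc (l+1) K, Rhi j = ∑ j ∈ Icc (l+1) K, R j := (hsum_eq (l+1) le_rfl).symm
        _ ≤ ∑ j ∈ Icc k K, R j := by linarith
        _ ≤ R1 := hRsum
    · intro c hc
      rw [Finset.mem_Icc] at hc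
      rw [← hReq c hc.1 hc.2]
      exact (hRc c (Finset.mem_Icc.mpr ⟨by omega, hc.2⟩)).2.2
  · rintro ⟨h1, h2, h3, h4⟩
    set S : ℝ := ∑ j ∈ Icc (l+1) K, Rhi j with hS
    set T : ℕ → ℝ := fun c => if c ≤ l then max 0 (R1 - S - b c) else 0 with hT
    have hTl1 : T (l+1) = 0 := by simp [hT]
    have hsum : ∀ c, k ≤ c → c ≤ l →
        ∑ j ∈ Icc c K, (if j ≤ l then T j - T (j+1) else Rhi j) = T c + S := by
      intro c hc1 hc2
      rw [split_sum_aux _ c l K (by omega) hc2 (by omega)]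
      have e1 : ∑ j ∈ Icc c l, (if j ≤ l then T j - T (j+1) else Rhi j)
          = ∑ j ∈ Icc c l, (T j - T (j+1)) := by
        refine Finset.sum_congr rfl fun j hj => ?_
        rw [Finset.mem_Icc] at hj
        rw [if_pos hj.2]
      have e2 : ∑ j ∈ Icc (l+1) K, (if j ≤ l then T j - T (j+1) else Rhi j) = S := by
        refine Finset.sum_congr rfl fun j hj => ?_
        rw [Finset.mem_Icc] at hj
        rw [if_neg (by omega)]
      rw [e1, e2, tele_aux T c l (by omega), hTl1]
      ring
    have hsum_hi : ∀ c, l + 1 ≤ c →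
        ∑ j ∈ Icc c K, (if j ≤ l then T j - T (j+1) else Rhi j)
          = ∑ j ∈ Icc c K, Rhi j := by
      intro c hc
      refine Finset.sum_congr rfl fun j hj => ?_
      rw [Finset.mem_Icc] at hj
      rw [if_neg (by omega)]
    refine ⟨fun j => if j ≤ l then T j - T (j+1) else Rhi j, ?_, ?_, ?_⟩
    · intro j hj _; simp only [if_neg (by omega : ¬ j ≤ l)]
    · intro c hc
      rw [Finset.mem_Icc] at hc
      rcases le_or_gt c l with hcl | hcl
      · obtain ⟨ha1, ha2⟩ := h1 c (Finset.mem_Icc.mpr ⟨hc.1, hcl⟩)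
        have hTc : T c = max 0 (R1 - S - b c) := by simp [hT, if_pos hcl]
        refine ⟨?_, ?_, ?_⟩
        · rw [hsum c hc.1 hcl, hTc]
          have : max 0 (R1 - S - b c) ≤ a c - R0 - S :=
            max_le (by linarith) (by linarith)
          linarith
        · rw [hsum c hc.1 hcl, hTc]
          have := le_max_right (0:ℝ) (R1 - S - b c)
          linarith
        · show 0 ≤ if c ≤ l then T c - T (c+1) else Rhi c
          rw [if_pos hcl, hTc, sub_nonneg]
          rcases le_or_gt (c+1) l with hcl1 | hcl1
          · have hTc1 : T (c+1) = max 0 (R1 - S - b (c+1)) := by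
              simp [hT, if_pos hcl1]
            rw [hTc1]
            refine max_le_max le_rfl ?_
            have := hbmono c (c+1) hc.1 (by omega) (by omega)
            linarith
          · have hTc1 : T (c+1) = 0 := by simp [hT, if_neg (by omega : ¬ c + 1 ≤ l)]
            rw [hTc1]
            exact le_max_left _ _
      · have hcm : c ∈ Icc (l+1) K := Finset.mem_Icc.mpr ⟨by omega, hc.2⟩
        obtain ⟨ha1, ha2⟩ := h2 c hcm
        rw [hsum_hi c (by omega)]
        refine ⟨ha1, ha2, ?_⟩
        show 0 ≤ if c ≤ l then T c - T (c+1) else Rhi c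
        rw [if_neg (by omega : ¬ c ≤ l)]
        exact h4 c hcm
    · rw [hsum k le_rfl hkl]
      have hTk : T k = max 0 (R1 - S - b k) := by simp [hT, if_pos hkl]
      have hbk := hb0 k le_rfl (by omega)
      have : max 0 (R1 - S - b k) ≤ R1 - S := max_le (by linarith) (by linarith)
      rw [hTk]
      linarith
end

section
/- Let K ≥ 2 and let k, i be integers with 1 ≤ k ≤ i ≤ K−2. Let a, b : {k,…,K} → ℝ satisfy 0 ≤ b(c) for every c and b(c) ≤ b(c′) whenever k ≤ c ≤ c′ ≤ K. Then for all real numbers R0, R1 and all real numbers R_{1,i+2},…,R_{1,K}, the following are equivalent: (I) there exists a real number R_{1,i+1} ≥ 0 such that: for every c ∈ {k,…,i}: R0 + R1 ≤ b(c) + a(c) and R0 + R_{1,i+1} + Σ_{j=i+2}^{K} R_{1,j} ≤ a(c); R0 + R_{1,i+1} + Σ_{j=i+2}^{K} R_{1,j} ≤ a(i+1); R1 − R_{1,i+1} − Σ_{j=i+2}^{K} R_{1,j} ≤ b(i+1); for every c ∈ {i+2,…,K}: R0 + Σ_{j=c}^{K} R_{1,j} ≤ a(c) and R1 − Σ_{j=c}^{K}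 R_{1,j} ≤ b(c); R_{1,i+1} + Σ_{j=i+2}^{K} R_{1,j} ≤ R1; and R_{1,c} ≥ 0 for every c ∈ {i+2,…,K}; (II) for every c ∈ {k,…,i+1}: R0 + R1 ≤ b(c) + a(c) and R0 + Σ_{j=i+2}^{K} R_{1,j} ≤ a(c); for every c ∈ {i+2,…,K}: R0 + Σ_{j=c}^{K} R_{1,j} ≤ a(c) and R1 − Σ_{j=c}^{K} R_{1,j} ≤ b(c); Σ_{j=i+2}^{K} R_{1,j} ≤ R1; and R_{1,c} ≥ 0 for every c ∈ {i+2,…,K}. -/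
open Finset

/-- Induction step in the Appendix C proof of the paper's Lemma 2: Fourier–Motzkin
elimination of the single split rate `R_{1,i+1}`. -/
theorem lemma2_induction_step
    (K k i : ℕ) (hk : 1 ≤ k) (hki : k ≤ i) (hiK : i ≤ K - 2) (hK : 2 ≤ K)
    (a b : ℕ → ℝ)
    (hb0 : ∀ c, k ≤ c → c ≤ K → 0 ≤ b c)
    (hbmono : ∀ c c', k ≤ c → c ≤ c' → c' ≤ K → b c ≤ b c')
    (R0 R1 : ℝ) (Rhi : ℕ → ℝ) :
    (∃ t : ℝ, 0 ≤ t ∧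
        (∀ c ∈ Icc k i,
          R0 + R1 ≤ b c + a c ∧
          R0 + t + ∑ j ∈ Icc (i + 2) K, Rhi j ≤ a c) ∧
        R0 + t + ∑ j ∈ Icc (i + 2) K, Rhi j ≤ a (i + 1) ∧
        R1 - t - ∑ j ∈ Icc (i + 2) K, Rhi j ≤ b (i + 1) ∧
        (∀ c ∈ Icc (i + 2) K,
          R0 + ∑ j ∈ Icc c K, Rhi j ≤ a c ∧
          R1 - ∑ j ∈ Icc c K, Rhi j ≤ b c) ∧
        t + ∑ j ∈ Icc (i + 2) K, Rhi j ≤ R1 ∧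
        (∀ c ∈ Icc (i + 2) K, 0 ≤ Rhi c))
    ↔
    ((∀ c ∈ Icc k (i + 1),
        R0 + R1 ≤ b c + a c ∧
        R0 + ∑ j ∈ Icc (i + 2) K, Rhi j ≤ a c) ∧
     (∀ c ∈ Icc (i + 2) K,
        R0 + ∑ j ∈ Icc c K, Rhi j ≤ a c ∧
        R1 - ∑ j ∈ Icc c K, Rhi j ≤ b c) ∧
     ∑ j ∈ Icc (i + 2) K, Rhi j ≤ R1 ∧
     (∀ c ∈ Icc (i + 2) K, 0 ≤ Rhi c)) := by
  have hi2K : i + 2 ≤ K := by omega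
  have hbI : 0 ≤ b (i + 1) := hb0 (i + 1) (by omega) (by omega)
  set S := ∑ j ∈ Icc (i + 2) K, Rhi j with hS
  constructor
  · rintro ⟨t, ht0, h1, h2, h3, h4, h5, h6⟩
    refine ⟨?_, h4, by linarith, h6⟩
    intro c hc
    simp only [mem_Icc] at hc
    by_cases hci : c ≤ i
    · obtain ⟨hA, hB⟩ := h1 c (by simp [mem_Icc]; omega)
      exact ⟨hA, by linarith⟩
    · have : c = i + 1 := by omega
      subst this
      exact ⟨by linarith, by linarith⟩
  · rintro ⟨h1, h2, h3, h4⟩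
    refine ⟨max 0 (R1 - b (i + 1) - S), le_max_left _ _, ?_, ?_, ?_, h2, ?_, h4⟩
    · intro c hc
      simp only [mem_Icc] at hc
      obtain ⟨hA, hB⟩ := h1 c (by simp [mem_Icc]; omega)
      refine ⟨hA, ?_⟩
      have hbc : b c ≤ b (i + 1) := hbmono c (i + 1) (by omega) (by omega) (by omega)
      have := max_le (show (0:ℝ) ≤ a c - R0 - S by linarith) (show R1 - b (i + 1) - S ≤ a c - R0 - S by linarith)
      linarith [this]
    · obtain ⟨hA, hB⟩ := h1 (i + 1) (by simp [mem_Icc]; omega)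
      have hbc : b (i + 1) ≤ b (i + 1) := le_refl _
      have := max_le (show (0:ℝ) ≤ a (i + 1) - R0 - S by linarith) (show R1 - b (i + 1) - S ≤ a (i + 1) - R0 - S by linarith)
      linarith [this]
    · have := le_max_right 0 (R1 - b (i + 1) - S)
      linarith
    · have := max_le (by linarith : (0:ℝ) ≤ R1 - S) (by linarith : R1 - b (i + 1) - S ≤ R1 - S)
      linarith
end

section
/- Let K ≥ 2 and let k be an integer with 1 ≤ k ≤ K. Let a, b : {k,…,K} → ℝ satisfy 0 ≤ b(c) for every c and b(c) ≤ b(c′) whenever k ≤ c ≤ c′ ≤ K. Then for all real numbers R0 and R1, the following are equivalent: (I) there exist real numbers R_{1,k},…,R_{1,K} such that for every c ∈ {k,…,K}: R0 + Σ_{j=c}^{K} R_{1,j} ≤ a(c), R1 − Σ_{j=c}^{K} R_{1,j} ≤ b(c), and R_{1,c} ≥ 0, and moreover Σ_{j=k}^{K} R_{1,j} ≤ R1; (II) R1 ≥ 0 and, for every c ∈ {k,…,K}: R0 + R1 ≤ b(c) + a(c) and R0 ≤ a(c). -/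
open Finset

lemma telescope_aux (f : ℕ → ℝ) :
    ∀ n c, c ≤ n → ∑ j ∈ Icc c n, (f j - f (j + 1)) = f c - f (n + 1) := by
  intro n
  induction n with
  | zero =>
    intro c hc
    interval_cases c
    simp
  | succ m ih =>
    intro c hc
    rcases eq_or_lt_of_le hc with h | h
    · subst h; simp
    · have hcm : c ≤ m := Nat.lt_succ_iff.mp h
      rw [Finset.sum_Icc_succ_top (by omega), ih c hcm]
      ring

/-- Lemma 3 of the paper: projection of the split-rate polytope onto the
`(R0, R1)` plane. -/
theorem lemma3_projection
    (K k : ℕ) (hK : 2 ≤ K) (hk : 1 ≤ k) (hkK : k ≤ K)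
    (a b : ℕ → ℝ)
    (hb0 : ∀ c, k ≤ c → c ≤ K → 0 ≤ b c)
    (hbmono : ∀ c c', k ≤ c → c ≤ c' → c' ≤ K → b c ≤ b c')
    (R0 R1 : ℝ) :
    (∃ R : ℕ → ℝ,
        (∀ c ∈ Icc k K,
          R0 + ∑ j ∈ Icc c K, R j ≤ a c ∧
          R1 - ∑ j ∈ Icc c K, R j ≤ b c ∧
          0 ≤ R c) ∧
        ∑ j ∈ Icc k K, R j ≤ R1)
    ↔
    (0 ≤ R1 ∧
     ∀ c ∈ Icc k K, R0 + R1 ≤ b c + a c ∧ R0 ≤ a c) := by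
  constructor
  · rintro ⟨R, hR, hsum⟩
    have hnonneg : ∀ c, c ∈ Icc k K → 0 ≤ ∑ j ∈ Icc c K, R j := by
      intro c hc
      apply Finset.sum_nonneg
      intro j hj
      simp only [mem_Icc] at hc hj
      exact (hR j (mem_Icc.mpr ⟨le_trans hc.1 hj.1, hj.2⟩)).2.2
    constructor
    · exact le_trans (hnonneg k (mem_Icc.mpr ⟨le_refl k, hkK⟩)) hsum
    · intro c hc
      obtain ⟨h1, h2, h3⟩ := hR c hc
      constructor
      · linarith
      · linarith [hnonneg c hc]
  · rintro ⟨hR1, h⟩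
    set S : ℕ → ℝ := fun c => if c ≤ K then max (R1 - b c) 0 else 0 with hS
    refine ⟨fun c => S c - S (c + 1), ?_, ?_⟩
    · intro c hc
      simp only [mem_Icc] at hc
      rw [telescope_aux S K c hc.2]
      have hSK1 : S (K + 1) = 0 := by simp [hS]
      have hSc : S c = max (R1 - b c) 0 := by simp [hS, hc.2]
      obtain ⟨ha1, ha2⟩ := h c (mem_Icc.mpr hc)
      refine ⟨?_, ?_, ?_⟩
      · rw [hSK1, hSc]
        rcases max_cases (R1 - b c) 0 with ⟨he, _⟩ | ⟨he, _⟩ <;> rw [he] <;> linarith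
      · rw [hSK1, hSc]
        have := le_max_left (R1 - b c) 0
        linarith
      · show 0 ≤ S c - S (c + 1)
        rcases eq_or_lt_of_le hc.2 with hck | hck
        · have : S (c + 1) = 0 := by simp [hS, hck]
          rw [this, hSc]
          linarith [le_max_right (R1 - b c) 0]
        · have hc1 : c + 1 ≤ K := hck
          have hSc1 : S (c + 1) = max (R1 - b (c + 1)) 0 := by simp [hS, hc1]
          rw [hSc, hSc1]
          have hmb : b c ≤ b (c + 1) := hbmono c (c + 1) hc.1 (by omega) hc1
          have : max (R1 - b (c + 1)) 0 ≤ max (R1 - b c) 0 :=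
            max_le_max (by linarith) le_rfl
          linarith
    · rw [telescope_aux S K k hkK]
      have hSK1 : S (K + 1) = 0 := by simp [hS]
      have hSk : S k = max (R1 - b k) 0 := by simp [hS, hkK]
      rw [hSK1, hSk]
      have := hb0 k le_rfl hkK
      rcases max_cases (R1 - b k) 0 with ⟨he, _⟩ | ⟨he, _⟩ <;> rw [he] <;> linarith
end

section
/- Let K ≥ 2 and let k be an integer with 1 ≤ k ≤ K−1. Let a, b : {k,…,K} → ℝ satisfy b(c) ≤ b(K) for every c ∈ {k,…,K−1} and 0 ≤ b(K). Then for all real numbers R0 and R1, the following are equivalent: (I) there exists a real number R_{1,K} such that: R0 + R1 ≤ b(c) + a(c) for every c ∈ {k,…,K−1}; R0 + R_{1,K} ≤ a(c) for every c ∈ {k,…,K−1}; R0 + R_{1,K} ≤ a(K); R1 − R_{1,K} ≤ b(K); R_{1,K} ≤ R1; and 0 ≤ R_{1,K}; (II) R1 ≥ 0 and, for every c ∈ {k,…,K}: R0 + R1 ≤ b(c) + a(c) and R0 ≤ a(c). -/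
open Finset

/-- Final Fourier–Motzkin elimination step in the proof of the paper's Lemma 3:
eliminating the last split rate `R_{1,K}`. -/
theorem lemma3_final_FME_step
    (K k : ℕ) (hK : 2 ≤ K) (hk : 1 ≤ k) (hkK : k ≤ K - 1)
    (a b : ℕ → ℝ)
    (hbK : ∀ c ∈ Icc k (K - 1), b c ≤ b K)
    (hb0 : 0 ≤ b K)
    (R0 R1 : ℝ) :
    (∃ rK : ℝ,
        (∀ c ∈ Icc k (K - 1), R0 + R1 ≤ b c + a c) ∧
        (∀ c ∈ Icc k (K - 1), R0 + rK ≤ a c) ∧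
        R0 + rK ≤ a K ∧
        R1 - rK ≤ b K ∧
        rK ≤ R1 ∧
        0 ≤ rK)
    ↔
    (0 ≤ R1 ∧
     ∀ c ∈ Icc k K, R0 + R1 ≤ b c + a c ∧ R0 ≤ a c) := by
  constructor
  · rintro ⟨rK, h1, h2, h3, h4, h5, h6⟩
    refine ⟨le_trans h6 h5, ?_⟩
    intro c hc
    rw [mem_Icc] at hc
    rcases eq_or_lt_of_le hc.2 with hcK | hcK
    · subst hcK; constructor <;> linarith
    · have hc' : c ∈ Icc k (K - 1) := by rw [mem_Icc]; omega
      exact ⟨h1 c hc', by linarith [h2 c hc']⟩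
  · rintro ⟨hR1, h⟩
    have hKmem : K ∈ Icc k K := by rw [mem_Icc]; omega
    obtain ⟨hK1, hK2⟩ := h K hKmem
    have hmem : ∀ c ∈ Icc k (K - 1), c ∈ Icc k K := by
      intro c hc; rw [mem_Icc] at *; omega
    refine ⟨max 0 (R1 - b K), fun c hc => (h c (hmem c hc)).1, ?_, ?_, ?_, ?_, le_max_left _ _⟩
    · intro c hc
      rcases max_cases 0 (R1 - b K) with ⟨he, _⟩ | ⟨he, _⟩ <;> rw [he]
      · linarith [(h c (hmem c hc)).2]
      · linarith [(h c (hmem c hc)).1, hbK c hc]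
    · rcases max_cases 0 (R1 - b K) with ⟨he, _⟩ | ⟨he, _⟩ <;> rw [he] <;> linarith
    · rcases max_cases 0 (R1 - b K) with ⟨he, hle⟩ | ⟨he, _⟩ <;> rw [he] <;> linarith
    · rcases max_cases 0 (R1 - b K) with ⟨he, _⟩ | ⟨he, _⟩ <;> rw [he] <;> linarith
end

section
/- Let K and L be integers with 1 ≤ L ≤ K−1. Let a : {L+1,…,K} → ℝ, let d : {1,…,L} → ℝ, and for each s ∈ {1,…,L} let b_s : {L+1,…,K} → ℝ satisfy 0 ≤ b_s(c) for every c and b_s(c) ≤ b_s(c′) whenever L+1 ≤ c ≤ c′ ≤ K−1. Then for all real numbers R0 and R1, the following are equivalent: (I) there exist real numbers R_{1,L+1},…,R_{1,K−1} ≥ 0 with Σ_{j=L+1}^{K−1} R_{1,j} ≤ R1 such that: R0 ≤ a(K); R0 + Σ_{j=c}^{K−1} R_{1,j} ≤ a(c) for every c ∈ {L+1,…,K−1}; R1 ≤ b_s(K) for every s ∈ {1,…,L}; R1 − Σ_{j=c}^{K−1} R_{1,j} ≤ b_s(c) for every s ∈ {1,…,L} and every c ∈ {L+1,…,K−1}; and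 R0 + R1 ≤ d(s) for every s ∈ {1,…,L}; (II) R1 ≥ 0; R0 ≤ a(c) for every c ∈ {L+1,…,K}; R1 ≤ b_s(K) for every s ∈ {1,…,L}; R0 + R1 ≤ b_s(c) + a(c) for every s ∈ {1,…,L} and every c ∈ {L+1,…,K−1}; and R0 + R1 ≤ d(s) for every s ∈ {1,…,L}. -/
open Finset

/-- The split-rate elimination underlying the paper's Theorem 2: the
two-dimensional region (8) equals the projection onto `(R0, R1)` of the
split-rate reliability polytope, intersected over all private receivers. -/
theorem theorem2_split_rate_elimination
    (K L : ℕ) (hL : 1 ≤ L) (hLK : L ≤ K - 1) (hK : 2 ≤ K)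
    (a : ℕ → ℝ) (d : ℕ → ℝ) (b : ℕ → ℕ → ℝ)
    (hb0 : ∀ s ∈ Icc 1 L, ∀ c ∈ Icc (L + 1) K, 0 ≤ b s c)
    (hbmono : ∀ s ∈ Icc 1 L, ∀ c c', L + 1 ≤ c → c ≤ c' → c' ≤ K - 1 → b s c ≤ b s c')
    (R0 R1 : ℝ) :
    (∃ R : ℕ → ℝ,
        (∀ j ∈ Icc (L + 1) (K - 1), 0 ≤ R j) ∧
        ∑ j ∈ Icc (L + 1) (K - 1), R j ≤ R1 ∧
        R0 ≤ a K ∧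
        (∀ c ∈ Icc (L + 1) (K - 1), R0 + ∑ j ∈ Icc c (K - 1), R j ≤ a c) ∧
        (∀ s ∈ Icc 1 L, R1 ≤ b s K) ∧
        (∀ s ∈ Icc 1 L, ∀ c ∈ Icc (L + 1) (K - 1),
          R1 - ∑ j ∈ Icc c (K - 1), R j ≤ b s c) ∧
        (∀ s ∈ Icc 1 L, R0 + R1 ≤ d s))
    ↔
    (0 ≤ R1 ∧
     (∀ c ∈ Icc (L + 1) K, R0 ≤ a c) ∧
     (∀ s ∈ Icc 1 L, R1 ≤ b s K) ∧
     (∀ s ∈ Icc 1 L, ∀ c ∈ Icc (L + 1) (K - 1), R0 + R1 ≤ b s c + a c) ∧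
     (∀ s ∈ Icc 1 L, R0 + R1 ≤ d s)) := by
  have hLK' : L + 1 ≤ K := by omega
  have hne : (Icc 1 L).Nonempty := ⟨1, by simp [hL]⟩
  constructor
  · rintro ⟨R, hR0, hRsum, hRa, hRac, hRb, hRbc, hRd⟩
    have hTnn : ∀ c ∈ Icc (L+1) (K-1), 0 ≤ ∑ j ∈ Icc c (K-1), R j := by
      intro c hc
      apply Finset.sum_nonneg
      intro j hj
      simp only [mem_Icc] at hc hj
      exact hR0 j (by simp only [mem_Icc]; omega)
    refine ⟨?_, ?_, hRb, ?_, hRd⟩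
    · have h0 : 0 ≤ ∑ j ∈ Icc (L+1) (K-1), R j :=
        Finset.sum_nonneg (fun j hj => hR0 j hj)
      linarith
    · intro c hc
      simp only [mem_Icc] at hc
      rcases eq_or_lt_of_le hc.2 with h | h
      · exact h ▸ hRa
      · have hc' : c ∈ Icc (L+1) (K-1) := by simp only [mem_Icc]; omega
        have := hRac c hc'
        have := hTnn c hc'
        linarith
    · intro s hs c hc
      have h1 := hRbc s hs c hc
      have h2 := hRac c hc
      linarith
  · rintro ⟨h1, h2, h3, h4, h5⟩
    set m : ℕ → ℝ := fun c => (Icc 1 L).inf' hne (fun s => b s c) with hm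
    have hm_nn : ∀ c, L + 1 ≤ c → c ≤ K → 0 ≤ m c := by
      intro c hc1 hc2
      apply Finset.le_inf'
      intro s hs
      exact hb0 s hs c (by simp only [mem_Icc]; omega)
    have hm_le : ∀ c, ∀ s ∈ Icc 1 L, m c ≤ b s c := by
      intro c s hs
      exact Finset.inf'_le _ hs
    have hm_mono : ∀ c c', L + 1 ≤ c → c ≤ c' → c' ≤ K - 1 → m c ≤ m c' := by
      intro c c' h1' h2' h3'
      apply Finset.le_inf'
      intro s hs
      exact le_trans (Finset.inf'_le _ hs) (hbmono s hs c c' h1' h2' h3')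
    have hm_ex : ∀ c, ∃ s ∈ Icc 1 L, m c = b s c := by
      intro c
      exact Finset.exists_mem_eq_inf' hne _
    set T : ℕ → ℝ := fun c => if c < K then max 0 (R1 - m c) else 0 with hT
    have hTdef : ∀ c, T c = if c < K then max 0 (R1 - m c) else 0 := fun c => rfl
    -- telescoping
    have hsum : ∀ c, c ≤ K → ∑ j ∈ Icc c (K-1), (T j - T (j+1)) = T c := by
      intro c hc
      have hIcc : Icc c (K-1) = Ico c K := by
        rw [← Finset.Ico_add_one_right_eq_Icc]
        congr 1
        omega
      rw [hIcc, Finset.sum_Ico_eq_sum_range]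
      have : ∑ i ∈ range (K - c), (T (c + i) - T (c + i + 1))
          = ∑ i ∈ range (K - c), ((fun i => T (c + i)) i - (fun i => T (c + i)) (i + 1)) := by
        apply Finset.sum_congr rfl
        intro i _
        simp only []
        ring_nf
      rw [this, Finset.sum_range_sub' (fun i => T (c + i))]
      have hK0 : T (c + (K - c)) = 0 := by
        have : c + (K - c) = K := by omega
        rw [this, hTdef]
        simp
      rw [hK0]
      simp
    have hTnn : ∀ c, 0 ≤ T c := by
      intro c
      rw [hTdef]
      split <;> simp [le_max_iff]
    refine ⟨fun j => T j - T (j+1), ?_, ?_, h2 K (by simp only [mem_Icc]; omega), ?_, h3, ?_, h5⟩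
    · -- nonnegativity of each R j
      intro j hj
      simp only [mem_Icc] at hj
      rcases eq_or_lt_of_le hj.2 with h | h
      · -- j = K - 1, so j + 1 = K, T (j+1) = 0
        have hj1 : ¬ (j + 1 < K) := by omega
        have h0 : T (j + 1) = 0 := by rw [hTdef]; simp [hj1]
        show 0 ≤ T j - T (j + 1)
        rw [h0]
        simpa using hTnn j
      · -- j < K - 1
        have hjK : j < K := by omega
        have hj1K : j + 1 < K := by omega
        have hmle : m j ≤ m (j + 1) := hm_mono j (j + 1) hj.1 (by omega) (by omega)
        show 0 ≤ T j - T (j + 1)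
        rw [hTdef, hTdef]
        simp only [hjK, hj1K, if_pos]
        have : max 0 (R1 - m (j+1)) ≤ max 0 (R1 - m j) := by
          apply max_le (le_max_left _ _)
          exact le_trans (by linarith) (le_max_right _ _)
        linarith
    · -- total sum ≤ R1
      rw [hsum (L+1) hLK', hTdef]
      split
      · next hlt =>
        apply max_le h1
        have := hm_nn (L+1) le_rfl (by omega)
        linarith
      · exact h1
    · -- R0 + tail sum ≤ a c
      intro c hc
      simp only [mem_Icc] at hc
      rw [hsum c (by omega)]
      have hcK : c < K := by omega
      rw [hTdef]
      simp only [hcK, if_pos]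
      rcases hm_ex c with ⟨s0, hs0, hms0⟩
      have h4' := h4 s0 hs0 c (by simp only [mem_Icc]; omega)
      have h2' := h2 c (by simp only [mem_Icc]; omega)
      have : max 0 (R1 - m c) ≤ a c - R0 := by
        apply max_le (by linarith)
        rw [hms0]
        linarith
      linarith
    · -- R1 - tail sum ≤ b s c
      intro s hs c hc
      simp only [mem_Icc] at hc
      rw [hsum c (by omega)]
      have hcK : c < K := by omega
      have hmb := hm_le c s hs
      rw [hTdef]
      simp only [hcK, if_pos]
      have : R1 - m c ≤ max 0 (R1 - m c) := le_max_right _ _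
      linarith
end

section
/- Let K, L, l be integers with 1 ≤ L < L+1 ≤ l ≤ K, and set C1 = {L+1,…,l} and C2 = {l+1,…,K} (C2 may be empty). Let g : C1 → ℝ, h : C2 → ℝ, and for each s ∈ {1,…,L} let B_s, B′_s, d_s ∈ ℝ with 0 ≤ B′_s. Then for all real numbers R0 and R1, the following are equivalent: (I) there exist real numbers R_{1,1} ≥ 0 and R_{1,l} ≥ 0 with R1 = R_{1,1} + R_{1,l} such that: R0 + R_{1,l} ≤ g(c1) for every c1 ∈ C1; R0 ≤ h(c2) for every c2 ∈ C2; R1 ≤ B_s for every s; R1 − R_{1,l} ≤ B′_s for every s; and R0 + R1 ≤ d_s for every s; (II) R1 ≥ 0; R0 ≤ g(c1) for every c1 ∈ C1; R0 ≤ h(c2) for every c2 ∈ C2; R1 ≤ B_s for every s; R0 + R1 ≤ B′_s + g(c1) for every s and every c1 ∈ C1; and R0 + R1 ≤ d_s for every s. -/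
open Finset

/-- The Fourier–Motzkin elimination underlying the paper's Corollary 1:
splitting the private message into two parts and eliminating the single split
rate `R_{1,l}` yields the region (18). -/
theorem corollary1_split_rate_elimination
    (K L l : ℕ) (hL : 1 ≤ L) (hLl : L + 1 ≤ l) (hlK : l ≤ K)
    (g h : ℕ → ℝ) (B B' d : ℕ → ℝ)
    (hB' : ∀ s ∈ Icc 1 L, 0 ≤ B' s)
    (R0 R1 : ℝ) :
    (∃ r1 rl : ℝ, 0 ≤ r1 ∧ 0 ≤ rl ∧ R1 = r1 + rl ∧
        (∀ c1 ∈ Icc (L + 1) l, R0 + rl ≤ g c1) ∧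
        (∀ c2 ∈ Icc (l + 1) K, R0 ≤ h c2) ∧
        (∀ s ∈ Icc 1 L, R1 ≤ B s) ∧
        (∀ s ∈ Icc 1 L, R1 - rl ≤ B' s) ∧
        (∀ s ∈ Icc 1 L, R0 + R1 ≤ d s))
    ↔
    (0 ≤ R1 ∧
     (∀ c1 ∈ Icc (L + 1) l, R0 ≤ g c1) ∧
     (∀ c2 ∈ Icc (l + 1) K, R0 ≤ h c2) ∧
     (∀ s ∈ Icc 1 L, R1 ≤ B s) ∧
     (∀ s ∈ Icc 1 L, ∀ c1 ∈ Icc (L + 1) l, R0 + R1 ≤ B' s + g c1) ∧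
     (∀ s ∈ Icc 1 L, R0 + R1 ≤ d s)) := by
  constructor
  · rintro ⟨r1, rl, hr1, hrl, hR1, hg, hh, hB, hB'', hd⟩
    refine ⟨by linarith, fun c1 hc1 => by have := hg c1 hc1; linarith, hh, hB,
      fun s hs c1 hc1 => by have := hg c1 hc1; have := hB'' s hs; linarith, hd⟩
  · rintro ⟨hR1, hg, hh, hB, hBg, hd⟩
    have hne : (Icc (L + 1) l).Nonempty := ⟨L + 1, mem_Icc.2 ⟨le_refl _, hLl⟩⟩
    set m := (Icc (L + 1) l).inf' hne (fun c1 => g c1 - R0) with hm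
    set rl := min R1 m with hrl
    have hrl0 : 0 ≤ rl := le_min hR1 (le_inf' _ _ fun c1 hc1 => by
      have := hg c1 hc1; linarith)
    refine ⟨R1 - rl, rl, sub_nonneg.2 (min_le_left _ _), hrl0, by ring,
      fun c1 hc1 => ?_, hh, hB, fun s hs => ?_, hd⟩
    · have : rl ≤ g c1 - R0 := (min_le_right _ _).trans (inf'_le _ hc1)
      linarith
    · rcases min_cases R1 m with ⟨he, _⟩ | ⟨he, _⟩
      · have := hB' s hs; rw [hrl, he]; linarith
      · obtain ⟨c1, hc1, hc1e⟩ := exists_mem_eq_inf' hne (fun c1 => g c1 - R0)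
        have := hBg s hs c1 hc1
        rw [hrl, he, hm, hc1e]; linarith
end

section
/- Let C and S be nonempty finite index sets, let r ∈ S, and let a : C → ℝ, e : S → ℝ, f : S → ℝ be such that e(r) ≤ e(s) and f(r) ≤ f(s) for every s ∈ S, and a(c) + e(r) ≤ f(r) for every c ∈ C. Then the set of pairs (R0, R1) ∈ ℝ² satisfying R0 ≤ a(c) for all c ∈ C, R1 ≤ e(s) for all s ∈ S, and R0 + R1 ≤ f(s) for all s ∈ S, is equal to the set of pairs (R0, R1) satisfying R0 ≤ a(c) for all c ∈ C and R1 ≤ e(r). -/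
/-- Region reduction in Case (i) of the paper's Theorem 1: with a private
receiver `r` that is less capable than every other private receiver and less
noisy than every common receiver, the superposition-coding region (7)
simplifies to the region (8). -/
theorem theorem1_case_i_region_reduction
    {C S : Type*} [Fintype C] [Fintype S] [Nonempty C] [Nonempty S]
    (r : S) (a : C → ℝ) (e f : S → ℝ)
    (he : ∀ s, e r ≤ e s) (hf : ∀ s, f r ≤ f s)
    (haef : ∀ c, a c + e r ≤ f r) :
    {p : ℝ × ℝ | (∀ c, p.1 ≤ a c) ∧ (∀ s, p.2 ≤ e s) ∧ (∀ s, p.1 + p.2 ≤ f s)}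
      = {p : ℝ × ℝ | (∀ c, p.1 ≤ a c) ∧ p.2 ≤ e r} := by
  ext p
  simp only [Set.mem_setOf_eq]
  constructor
  · rintro ⟨h1, h2, _⟩
    exact ⟨h1, h2 r⟩
  · rintro ⟨h1, h2⟩
    refine ⟨h1, fun s => h2.trans (he s), fun s => ?_⟩
    obtain ⟨c⟩ := ‹Nonempty C›
    calc p.1 + p.2 ≤ a c + e r := add_le_add (h1 c) h2
      _ ≤ f r := haef c
      _ ≤ f s := hf s
end
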